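/- arXiv:1410.4617 — 4 statements merged into one kernel-verified Lean document; each statement's English description precedes it below -/
import Mathlib

section
/- No disclosure is symmetric: a frame F has no disclosure from C to C' if and only if F has no disclosure from C' to C. -/
open scoped Classical

/-- A (static) frame: locations `LO`, channels `CH`, data values `D`.
Each channel has a sender and a recipient location; each location carries a
prefix-closed set of finite-or-infinite sequences of labels, where a label for
`ℓ` is a pair `(c, v)` with `c` a channel of `ℓ` and `v ∈ D`.  Sequences are
represented as functions `ℕ → Option (CH × D)` whose domain is an initial
segment of `ℕ`. -/
structure Frame (LO CH D : Type) where
  sender : CH → LO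
  recipt : CH → LO
  traces : LO → Set (ℕ → Option (CH × D))
  traces_dom : ∀ ℓ, ∀ t ∈ traces ℓ, ∀ m n : ℕ, m ≤ n → t n ≠ none → t m ≠ none
  traces_labels : ∀ ℓ, ∀ t ∈ traces ℓ, ∀ n c v, t n = some (c, v) →
    sender c = ℓ ∨ recipt c = ℓ
  traces_prefix : ∀ ℓ, ∀ t ∈ traces ℓ, ∀ n : ℕ,
    (fun m => if m < n then t m else none) ∈ traces ℓ

/-- Raw data of a system of events: a carrier set of events with a relation. -/
structure EvStruct (E : Type) where
  carrier : Set E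
  rel : E → E → Prop

variable {LO CH D E : Type}

/-- `B` is a system of events: `rel` is a partial order on `carrier`, and every
event has only finitely many predecessors. -/
def IsSysEv (B : EvStruct E) : Prop :=
  (∀ a b, B.rel a b → a ∈ B.carrier ∧ b ∈ B.carrier) ∧
  (∀ a ∈ B.carrier, B.rel a a) ∧
  (∀ a b, B.rel a b → B.rel b a → a = b) ∧
  (∀ a b c, B.rel a b → B.rel b c → B.rel a c) ∧
  (∀ a ∈ B.carrier, {x | B.rel x a}.Finite)

/-- `B1` is a substructure of `B2`: carrier included, order the restriction. -/
def Substructure (B1 B2 : EvStruct E) : Prop :=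
  B1.carrier ⊆ B2.carrier ∧
  ∀ a b, B1.rel a b ↔ (a ∈ B1.carrier ∧ b ∈ B1.carrier ∧ B2.rel a b)

/-- Initial substructure: a substructure that is downward closed. -/
def InitialSubstructure (B1 B2 : EvStruct E) : Prop :=
  Substructure B1 B2 ∧ ∀ y ∈ B1.carrier, ∀ x, B2.rel x y → x ∈ B1.carrier

/-- The events of `B` whose channel has `ℓ` as sender or recipient. -/
def evProj (F : Frame LO CH D) (chan : E → CH) (B : EvStruct E) (ℓ : LO) : Set E :=
  {e | e ∈ B.carrier ∧ (F.sender (chan e) = ℓ ∨ F.recipt (chan e) = ℓ)}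

/-- The projection of `B` to location `ℓ`, viewed as a sequence of labels:
the `n`-th entry is the label of the event of `evProj F chan B ℓ` having
exactly `n` strict predecessors there. -/
noncomputable def projSeq (F : Frame LO CH D) (chan : E → CH) (msg : E → D)
    (B : EvStruct E) (ℓ : LO) : ℕ → Option (CH × D) := fun n =>
  if h : ∃ e, e ∈ evProj F chan B ℓ ∧
      Set.ncard {e' | e' ∈ evProj F chan B ℓ ∧ B.rel e' e ∧ e' ≠ e} = n
  then some (chan h.choose, msg h.choose)
  else none

/-- `B` is an execution of `F`: a system of events whose projection to each
location is linearly ordered and, viewed as a sequence, a trace of that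
location. -/
def IsExec (F : Frame LO CH D) (chan : E → CH) (msg : E → D) (B : EvStruct E) : Prop :=
  IsSysEv B ∧ ∀ ℓ : LO,
    (∀ a ∈ evProj F chan B ℓ, ∀ b ∈ evProj F chan B ℓ, B.rel a b ∨ B.rel b a) ∧
    projSeq F chan msg B ℓ ∈ F.traces ℓ

/-- Restriction `B|C` of `B` to the events whose channel lies in `C`. -/
def evRestrict (chan : E → CH) (B : EvStruct E) (C : Set CH) : EvStruct E where
  carrier := {e | e ∈ B.carrier ∧ chan e ∈ C}
  rel := fun a b => B.rel a b ∧ chan a ∈ C ∧ chan b ∈ C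

/-- `lruns C`: the `C`-runs of `F`, i.e. restrictions to `C` of executions. -/
def lruns (F : Frame LO CH D) (chan : E → CH) (msg : E → D) (C : Set CH) :
    Set (EvStruct E) :=
  {B | ∃ A : EvStruct E, IsExec F chan msg A ∧ evRestrict chan A C = B}

/-- `J_{C→C'}(B)`: the `C'`-runs compatible with `B`. -/
def cmpt (F : Frame LO CH D) (chan : E → CH) (msg : E → D)
    (C C' : Set CH) (B : EvStruct E) : Set (EvStruct E) :=
  {B' | ∃ A : EvStruct E, IsExec F chan msg A ∧
      evRestrict chan A C = B ∧ evRestrict chan A C' = B'}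

/-- `F` has no disclosure from `C` to `C'`. -/
def NoDisclosure (F : Frame LO CH D) (chan : E → CH) (msg : E → D)
    (C C' : Set CH) : Prop :=
  ∀ B ∈ lruns F chan msg C, cmpt F chan msg C C' B = lruns F chan msg C'

/-- no disclosure is symmetric. -/
theorem noDisclosure_symm (F : Frame LO CH D) (chan : E → CH) (msg : E → D)
    (C C' : Set CH) :
    NoDisclosure F chan msg C C' ↔ NoDisclosure F chan msg C' C := by
  have key : ∀ C C' : Set CH, NoDisclosure F chan msg C C' → NoDisclosure F chan msg C' C := by
    intro C C' h B' hB'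
    apply Set.eq_of_subset_of_subset
    · rintro B ⟨A, hA, hAC', hAC⟩
      exact ⟨A, hA, hAC⟩
    · rintro B hB
      have h2 := h B hB
      have hB'2 : B' ∈ cmpt F chan msg C C' B := by rw [h2]; exact hB'
      obtain ⟨A, hA, hAC, hAC'⟩ := hB'2
      exact ⟨A, hA, hAC', hAC⟩
  exact ⟨key C C', key C' C⟩
end

section
/- Suppose C0 ⊆ C1 and C0' ⊆ C1' are sets of channels of a frame F. If F has no disclosure from C1 to C1', then F has no disclosure from C0 to C0'. -/
open scoped Classical

variable {LO CH D E : Type}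

lemma restrict_mono_eq {LO CH D E : Type} (F : Frame LO CH D) (chan : E → CH)
    (A A' : EvStruct E) (C0 C1 : Set CH) (h0 : C0 ⊆ C1)
    (heq : evRestrict chan A C1 = evRestrict chan A' C1) :
    evRestrict chan A C0 = evRestrict chan A' C0 := by
  have hc := congrArg EvStruct.carrier heq
  have hr := congrArg EvStruct.rel heq
  simp only [evRestrict] at hc hr
  unfold evRestrict
  congr 1
  · ext e
    have := Set.ext_iff.mp hc e
    simp only [Set.mem_setOf_eq] at this ⊢
    constructor
    · rintro ⟨he, hc0⟩
      exact ⟨(this.mp ⟨he, h0 hc0⟩).1, hc0⟩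
    · rintro ⟨he, hc0⟩
      exact ⟨(this.mpr ⟨he, h0 hc0⟩).1, hc0⟩
  · funext a b
    have := congrFun (congrFun hr a) b
    simp only [eq_iff_iff] at this
    apply propext
    constructor
    · rintro ⟨hab, ha, hb⟩
      exact ⟨(this.mp ⟨hab, h0 ha, h0 hb⟩).1, ha, hb⟩
    · rintro ⟨hab, ha, hb⟩
      exact ⟨(this.mpr ⟨hab, h0 ha, h0 hb⟩).1, ha, hb⟩

/-- no disclosure is monotone under shrinking both channel sets. -/
theorem noDisclosure_mono (F : Frame LO CH D) (chan : E → CH) (msg : E → D)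
    (C0 C1 C0' C1' : Set CH) (h0 : C0 ⊆ C1) (h0' : C0' ⊆ C1')
    (h : NoDisclosure F chan msg C1 C1') :
    NoDisclosure F chan msg C0 C0' := by
  intro B hB
  obtain ⟨A, hA, hAB⟩ := hB
  have hmain := h _ ⟨A, hA, rfl⟩
  ext B'
  constructor
  · rintro ⟨A'', h'', hC0, hC0'⟩
    exact ⟨A'', h'', hC0'⟩
  · rintro ⟨A', hA', hA'B'⟩
    have hB1' : evRestrict chan A' C1' ∈ lruns F chan msg C1' := ⟨A', hA', rfl⟩
    rw [← hmain] at hB1'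
    obtain ⟨A'', hA'', hA''1, hA''1'⟩ := hB1'
    refine ⟨A'', hA'', ?_, ?_⟩
    · rw [← hAB]; exact restrict_mono_eq F chan A'' A C0 C1 h0 hA''1
    · rw [← hA'B']; exact restrict_mono_eq F chan A'' A' C0' C1' h0' hA''1'
end

section
/- Cut lemma: let lcut be an undirected cut between lsrc and lobs in a frame F, and let B_o be an lobs-run. Then J_{lobs→lsrc}(B_o) = ⋃_{B_c ∈ J_{lobs→lcut}(B_o)} J_{lcut→lsrc}(B_c). -/
open scoped Classical

variable {LO CH D E : Type}

/-- The locations that are sender or recipient of some channel in `C`. -/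
def pends (F : Frame LO CH D) (C : Set CH) : Set LO :=
  {ℓ | ∃ c ∈ C, F.sender c = ℓ ∨ F.recipt c = ℓ}

/-- Adjacency in the undirected graph of `F` via a channel avoiding `K`. -/
def adjAvoiding (F : Frame LO CH D) (K : Set CH) (ℓ1 ℓ2 : LO) : Prop :=
  ∃ c, c ∉ K ∧
    ((F.sender c = ℓ1 ∧ F.recipt c = ℓ2) ∨ (F.sender c = ℓ2 ∧ F.recipt c = ℓ1))

/-- `lcut` is an undirected cut between `lsrc` and `lobs`: the three sets are
pairwise disjoint and every undirected path from a location of `pends lobs`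
to a location of `pends lsrc` traverses some channel of `lcut`, i.e. there is
no path avoiding `lcut`. -/
def IsCut (F : Frame LO CH D) (lsrc lcut lobs : Set CH) : Prop :=
  (Disjoint lsrc lcut ∧ Disjoint lsrc lobs ∧ Disjoint lcut lobs) ∧
  ∀ ℓ1 ∈ pends F lobs, ∀ ℓ2 ∈ pends F lsrc,
    ¬ Relation.ReflTransGen (adjAvoiding F lcut) ℓ1 ℓ2

theorem EvStruct.ext' {B1 B2 : EvStruct E} (h1 : B1.carrier = B2.carrier)
    (h2 : B1.rel = B2.rel) : B1 = B2 := by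
  cases B1; cases B2; simp_all

theorem projSeq_congr (F : Frame LO CH D) (chan : E → CH) (msg : E → D)
    (B B' : EvStruct E) (ℓ : LO)
    (hS : evProj F chan B ℓ = evProj F chan B' ℓ)
    (hR : ∀ a b, a ∈ evProj F chan B ℓ → b ∈ evProj F chan B ℓ →
      (B.rel a b ↔ B'.rel a b)) :
    projSeq F chan msg B ℓ = projSeq F chan msg B' ℓ := by
  have hSm := Set.ext_iff.mp hS
  funext n
  have hPQ : (fun e => e ∈ evProj F chan B ℓ ∧
        Set.ncard {e' | e' ∈ evProj F chan B ℓ ∧ B.rel e' e ∧ e' ≠ e} = n)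
      = (fun e => e ∈ evProj F chan B' ℓ ∧
        Set.ncard {e' | e' ∈ evProj F chan B' ℓ ∧ B'.rel e' e ∧ e' ≠ e} = n) := by
    funext e
    apply propext
    have hsets : ∀ he : e ∈ evProj F chan B ℓ,
        {e' | e' ∈ evProj F chan B ℓ ∧ B.rel e' e ∧ e' ≠ e}
          = {e' | e' ∈ evProj F chan B' ℓ ∧ B'.rel e' e ∧ e' ≠ e} := by
      intro he
      ext e'
      simp only [Set.mem_setOf_eq]
      constructor
      · rintro ⟨h1, h2, h3⟩
        exact ⟨(hSm e').mp h1, (hR e' e h1 he).1 h2, h3⟩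
      · rintro ⟨h1, h2, h3⟩
        have h1' : e' ∈ evProj F chan B ℓ := (hSm e').mpr h1
        exact ⟨h1', (hR e' e h1' he).2 h2, h3⟩
    constructor
    · rintro ⟨he, hn⟩
      exact ⟨(hSm e).mp he, by rw [← hsets he]; exact hn⟩
    · rintro ⟨he, hn⟩
      have he' : e ∈ evProj F chan B ℓ := (hSm e).mpr he
      exact ⟨he', by rw [hsets he']; exact hn⟩
  simp only [projSeq]
  rw [hPQ]
theorem merge_exec (F : Frame LO CH D) (chan : E → CH) (msg : E → D)
    (lsrc lcut lobs : Set CH) (hcut : IsCut F lsrc lcut lobs)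
    (A1 A2 : EvStruct E) (h1 : IsExec F chan msg A1) (h2 : IsExec F chan msg A2)
    (hcc : evRestrict chan A1 lcut = evRestrict chan A2 lcut) :
    ∃ A : EvStruct E, IsExec F chan msg A ∧
      evRestrict chan A lobs = evRestrict chan A1 lobs ∧
      evRestrict chan A lsrc = evRestrict chan A2 lsrc := by
  obtain ⟨⟨h1c, h1r, h1a, h1t, h1f⟩, hloc1⟩ := h1
  obtain ⟨⟨h2c, h2r, h2a, h2t, h2f⟩, hloc2⟩ := h2
  obtain ⟨⟨hd1, hd2, hd3⟩, hpath⟩ := hcut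
  -- consistency on the cut
  have hccC : ∀ e, chan e ∈ lcut → (e ∈ A1.carrier ↔ e ∈ A2.carrier) := by
    intro e hce
    have h := Set.ext_iff.mp (congrArg EvStruct.carrier hcc) e
    simp only [evRestrict, Set.mem_setOf_eq] at h
    exact ⟨fun hh => (h.mp ⟨hh, hce⟩).1, fun hh => (h.mpr ⟨hh, hce⟩).1⟩
  have hccR : ∀ a b, chan a ∈ lcut → chan b ∈ lcut → (A1.rel a b ↔ A2.rel a b) := by
    intro a b ha hb
    have h := Iff.of_eq (congrFun (congrFun (congrArg EvStruct.rel hcc) a) b)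
    simp only [evRestrict] at h
    exact ⟨fun hh => (h.mp ⟨hh, ha, hb⟩).1, fun hh => (h.mpr ⟨hh, ha, hb⟩).1⟩
  -- the source side of the undirected graph
  set Src : Set LO :=
    {ℓ | ∃ ℓ2 ∈ pends F lsrc, Relation.ReflTransGen (adjAvoiding F lcut) ℓ ℓ2} with hSrcdef
  have hSrcAdj : ∀ x y : LO, adjAvoiding F lcut x y → y ∈ Src → x ∈ Src := by
    rintro x y hxy ⟨ℓ2, hℓ2, hp⟩
    exact ⟨ℓ2, hℓ2, Relation.ReflTransGen.head hxy hp⟩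
  have hchanside : ∀ c ℓ, c ∉ lcut → (F.sender c = ℓ ∨ F.recipt c = ℓ) → ℓ ∈ Src →
      F.sender c ∈ Src := by
    intro c ℓ hc hℓ hs
    rcases hℓ with h | h
    · exact h ▸ hs
    · exact hSrcAdj _ _ ⟨c, hc, Or.inl ⟨rfl, h⟩⟩ hs
  have hchanside' : ∀ c ℓ, c ∉ lcut → (F.sender c = ℓ ∨ F.recipt c = ℓ) →
      F.sender c ∈ Src → ℓ ∈ Src := by
    intro c ℓ hc hℓ hs
    rcases hℓ with h | h
    · exact h ▸ hs
    · exact h ▸ hSrcAdj _ _ ⟨c, hc, Or.inr ⟨rfl, rfl⟩⟩ hs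
  -- source-side channels
  set SC : Set CH := {c | c ∉ lcut ∧ F.sender c ∈ Src} with hSCdef
  have hcutSC : ∀ c, c ∈ lcut → c ∉ SC := fun c h hs => hs.1 h
  have hsrcSC : ∀ c ∈ lsrc, c ∈ SC := by
    intro c hc
    exact ⟨Set.disjoint_left.mp hd1 hc,
      ⟨F.sender c, ⟨c, hc, Or.inl rfl⟩, Relation.ReflTransGen.refl⟩⟩
  have hobsSC : ∀ c ∈ lobs, c ∉ SC ∧ c ∉ lcut := by
    intro c hc
    refine ⟨?_, Set.disjoint_right.mp hd3 hc⟩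
    rintro ⟨hnc, ℓ2, hℓ2, hp⟩
    exact hpath (F.sender c) ⟨c, hc, Or.inl rfl⟩ ℓ2 hℓ2 hp
  have htouchSC : ∀ e ℓ, (F.sender (chan e) = ℓ ∨ F.recipt (chan e) = ℓ) →
      chan e ∉ lcut → (chan e ∈ SC ↔ ℓ ∈ Src) := by
    intro e ℓ hℓ hnc
    exact ⟨fun hsc => hchanside' _ _ hnc hℓ hsc.2,
      fun hs => ⟨hnc, hchanside _ _ hnc hℓ hs⟩⟩
  classical
  -- the merged structure
  set A : EvStruct E :=
    ⟨{e | (e ∈ A1.carrier ∧ chan e ∉ SC) ∨ (e ∈ A2.carrier ∧ chan e ∈ SC)},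
     fun a b =>
      (chan a ∉ SC ∧ chan b ∉ SC ∧ A1.rel a b) ∨
      (chan a ∈ SC ∧ chan b ∈ SC ∧ A2.rel a b) ∨
      (chan a ∉ SC ∧ chan b ∈ SC ∧ ∃ e, chan e ∈ lcut ∧ A1.rel a e ∧ A2.rel e b) ∨
      (chan a ∈ SC ∧ chan b ∉ SC ∧ ∃ e, chan e ∈ lcut ∧ A2.rel a e ∧ A1.rel e b)⟩
    with hAdef
  have hAcar : ∀ e, e ∈ A.carrier ↔
      ((e ∈ A1.carrier ∧ chan e ∉ SC) ∨ (e ∈ A2.carrier ∧ chan e ∈ SC)) := fun e => Iff.rfl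
  have hArel : ∀ a b, A.rel a b ↔
      ((chan a ∉ SC ∧ chan b ∉ SC ∧ A1.rel a b) ∨
      (chan a ∈ SC ∧ chan b ∈ SC ∧ A2.rel a b) ∨
      (chan a ∉ SC ∧ chan b ∈ SC ∧ ∃ e, chan e ∈ lcut ∧ A1.rel a e ∧ A2.rel e b) ∨
      (chan a ∈ SC ∧ chan b ∉ SC ∧ ∃ e, chan e ∈ lcut ∧ A2.rel a e ∧ A1.rel e b)) :=
    fun a b => Iff.rfl
  -- projections to locations outside Src
  have hproj1 : ∀ ℓ, ℓ ∉ Src → evProj F chan A ℓ = evProj F chan A1 ℓ := by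
    intro ℓ hℓ
    ext e
    simp only [evProj, Set.mem_setOf_eq]
    constructor
    · rintro ⟨he, ht⟩
      rcases (hAcar e).mp he with ⟨he1, _⟩ | ⟨_, hesc⟩
      · exact ⟨he1, ht⟩
      · exact absurd ((htouchSC e ℓ ht hesc.1).mp hesc) hℓ
    · rintro ⟨he1, ht⟩
      by_cases hsc : chan e ∈ SC
      · exact absurd ((htouchSC e ℓ ht hsc.1).mp hsc) hℓ
      · exact ⟨(hAcar e).mpr (Or.inl ⟨he1, hsc⟩), ht⟩
  have hrel1 : ∀ ℓ, ℓ ∉ Src → ∀ a b, a ∈ evProj F chan A1 ℓ → b ∈ evProj F chan A1 ℓ →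
      (A.rel a b ↔ A1.rel a b) := by
    intro ℓ hℓ a b ha hb
    have hna : chan a ∉ SC := fun hsc => hℓ ((htouchSC a ℓ ha.2 hsc.1).mp hsc)
    have hnb : chan b ∉ SC := fun hsc => hℓ ((htouchSC b ℓ hb.2 hsc.1).mp hsc)
    rw [hArel]
    constructor
    · rintro (⟨_, _, h⟩ | ⟨h, _⟩ | ⟨_, h, _⟩ | ⟨h, _⟩)
      · exact h
      · exact absurd h hna
      · exact absurd h hnb
      · exact absurd h hna
    · intro h
      exact Or.inl ⟨hna, hnb, h⟩
  -- classification and projections on the Src side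
  have hclass2 : ∀ ℓ, ℓ ∈ Src → ∀ e, e ∈ evProj F chan A2 ℓ →
      chan e ∈ SC ∨ (chan e ∈ lcut ∧ e ∈ A1.carrier ∧ e ∈ A2.carrier) := by
    intro ℓ hℓ e he
    by_cases hc : chan e ∈ lcut
    · exact Or.inr ⟨hc, (hccC e hc).mpr he.1, he.1⟩
    · exact Or.inl ((htouchSC e ℓ he.2 hc).mpr hℓ)
  have hproj2 : ∀ ℓ, ℓ ∈ Src → evProj F chan A ℓ = evProj F chan A2 ℓ := by
    intro ℓ hℓ
    ext e
    simp only [evProj, Set.mem_setOf_eq]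
    constructor
    · rintro ⟨he, ht⟩
      rcases (hAcar e).mp he with ⟨he1, hnsc⟩ | ⟨he2, _⟩
      · by_cases hc : chan e ∈ lcut
        · exact ⟨(hccC e hc).mp he1, ht⟩
        · exact absurd ((htouchSC e ℓ ht hc).mpr hℓ) hnsc
      · exact ⟨he2, ht⟩
    · rintro ⟨he2, ht⟩
      rcases hclass2 ℓ hℓ e ⟨he2, ht⟩ with hsc | ⟨hc, he1, _⟩
      · exact ⟨(hAcar e).mpr (Or.inr ⟨he2, hsc⟩), ht⟩
      · exact ⟨(hAcar e).mpr (Or.inl ⟨he1, hcutSC _ hc⟩), ht⟩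
  have hrel2 : ∀ ℓ, ℓ ∈ Src → ∀ a b, a ∈ evProj F chan A2 ℓ → b ∈ evProj F chan A2 ℓ →
      (A.rel a b ↔ A2.rel a b) := by
    intro ℓ hℓ a b ha hb
    have hca := hclass2 ℓ hℓ a ha
    have hcb := hclass2 ℓ hℓ b hb
    rw [hArel]
    constructor
    · rintro (⟨hna, hnb, h⟩ | ⟨_, _, h⟩ | ⟨hna, _, e, hec, hae, heb⟩ |
        ⟨_, hnb, e, hec, hae, heb⟩)
      · rcases hca with hsc | ⟨hc, _⟩
        · exact absurd hsc hna
        · rcases hcb with hsc | ⟨hc', _⟩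
          · exact absurd hsc hnb
          · exact (hccR a b hc hc').mp h
      · exact h
      · rcases hca with hsc | ⟨hc, _⟩
        · exact absurd hsc hna
        · exact h2t a e b ((hccR a e hc hec).mp hae) heb
      · rcases hcb with hsc | ⟨hc, _⟩
        · exact absurd hsc hnb
        · exact h2t a e b hae ((hccR e b hec hc).mp heb)
    · intro h
      rcases hca with hsca | ⟨hca', ha1, _⟩
      · rcases hcb with hscb | ⟨hcb', hb1, _⟩
        · exact Or.inr (Or.inl ⟨hsca, hscb, h⟩)
        · exact Or.inr (Or.inr (Or.inr ⟨hsca, hcutSC _ hcb', b, hcb', h, h1r b hb1⟩))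
      · rcases hcb with hscb | ⟨hcb', _, _⟩
        · exact Or.inr (Or.inr (Or.inl ⟨hcutSC _ hca', hscb, a, hca', h1r a ha1, h⟩))
        · exact Or.inl ⟨hcutSC _ hca', hcutSC _ hcb', (hccR a b hca' hcb').mpr h⟩
  refine ⟨A, ⟨⟨?_, ?_, ?_, ?_, ?_⟩, ?_⟩, ?_, ?_⟩
  · -- rel → carrier
    intro a b hab
    rcases (hArel a b).mp hab with ⟨hna, hnb, h⟩ | ⟨hsa, hsb, h⟩ |
      ⟨hna, hsb, e, _, hae, heb⟩ | ⟨hsa, hnb, e, _, hae, heb⟩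
    · exact ⟨(hAcar a).mpr (Or.inl ⟨(h1c a b h).1, hna⟩),
        (hAcar b).mpr (Or.inl ⟨(h1c a b h).2, hnb⟩)⟩
    · exact ⟨(hAcar a).mpr (Or.inr ⟨(h2c a b h).1, hsa⟩),
        (hAcar b).mpr (Or.inr ⟨(h2c a b h).2, hsb⟩)⟩
    · exact ⟨(hAcar a).mpr (Or.inl ⟨(h1c a e hae).1, hna⟩),
        (hAcar b).mpr (Or.inr ⟨(h2c e b heb).2, hsb⟩)⟩
    · exact ⟨(hAcar a).mpr (Or.inr ⟨(h2c a e hae).1, hsa⟩),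
        (hAcar b).mpr (Or.inl ⟨(h1c e b heb).2, hnb⟩)⟩
  · -- reflexivity
    intro a ha
    rcases (hAcar a).mp ha with ⟨ha1, hn⟩ | ⟨ha2, hs⟩
    · exact (hArel a a).mpr (Or.inl ⟨hn, hn, h1r a ha1⟩)
    · exact (hArel a a).mpr (Or.inr (Or.inl ⟨hs, hs, h2r a ha2⟩))
  · -- antisymmetry
    intro a b hab hba
    by_cases hsa : chan a ∈ SC <;> by_cases hsb : chan b ∈ SC
    · -- both in SC
      have h : A2.rel a b := by
        rcases (hArel a b).mp hab with ⟨hn, _⟩ | ⟨_, _, h⟩ | ⟨hn, _⟩ | ⟨_, hn, _⟩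
        · exact absurd hsa hn
        · exact h
        · exact absurd hsa hn
        · exact absurd hsb hn
      have h' : A2.rel b a := by
        rcases (hArel b a).mp hba with ⟨hn, _⟩ | ⟨_, _, h⟩ | ⟨hn, _⟩ | ⟨_, hn, _⟩
        · exact absurd hsb hn
        · exact h
        · exact absurd hsb hn
        · exact absurd hsa hn
      exact h2a a b h h'
    · -- a ∈ SC, b ∉ SC : hab via case 4, hba via case 3
      obtain ⟨e1, he1c, hae1, he1b⟩ :
          ∃ e, chan e ∈ lcut ∧ A2.rel a e ∧ A1.rel e b := by
        rcases (hArel a b).mp hab with ⟨hn, _⟩ | ⟨_, hn, _⟩ | ⟨hn, _⟩ | ⟨_, _, hex⟩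
        · exact absurd hsa hn
        · exact absurd hn hsb
        · exact absurd hsa hn
        · exact hex
      obtain ⟨e2, he2c, hbe2, he2a⟩ :
          ∃ e, chan e ∈ lcut ∧ A1.rel b e ∧ A2.rel e a := by
        rcases (hArel b a).mp hba with ⟨_, hn, _⟩ | ⟨hn, _⟩ | ⟨_, _, hex⟩ | ⟨hn, _⟩
        · exact absurd hsa hn
        · exact absurd hn hsb
        · exact hex
        · exact absurd hn hsb
      have h12 : A1.rel e1 e2 := h1t e1 b e2 he1b hbe2
      have h21 : A1.rel e2 e1 := (hccR e2 e1 he2c he1c).mpr (h2t e2 a e1 he2a hae1)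
      have he : e1 = e2 := h1a e1 e2 h12 h21
      have hb' : b = e1 := h1a b e1 (he ▸ hbe2) he1b
      have ha' : a = e1 := h2a a e1 hae1 (he ▸ he2a)
      rw [ha', hb']
    · -- a ∉ SC, b ∈ SC : symmetric
      obtain ⟨e1, he1c, hae1, he1b⟩ :
          ∃ e, chan e ∈ lcut ∧ A1.rel a e ∧ A2.rel e b := by
        rcases (hArel a b).mp hab with ⟨_, hn, _⟩ | ⟨hn, _⟩ | ⟨_, _, hex⟩ | ⟨hn, _⟩
        · exact absurd hsb hn
        · exact absurd hn hsa
        · exact hex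
        · exact absurd hn hsa
      obtain ⟨e2, he2c, hbe2, he2a⟩ :
          ∃ e, chan e ∈ lcut ∧ A2.rel b e ∧ A1.rel e a := by
        rcases (hArel b a).mp hba with ⟨hn, _⟩ | ⟨_, hn, _⟩ | ⟨hn, _⟩ | ⟨_, _, hex⟩
        · exact absurd hsb hn
        · exact absurd hn hsa
        · exact absurd hsb hn
        · exact hex
      have h12 : A2.rel e1 e2 := h2t e1 b e2 he1b hbe2
      have h21 : A2.rel e2 e1 := (hccR e2 e1 he2c he1c).mp (h1t e2 a e1 he2a hae1)
      have he : e1 = e2 := h2a e1 e2 h12 h21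
      have hb' : b = e1 := h2a b e1 (he ▸ hbe2) he1b
      have ha' : a = e1 := h1a a e1 hae1 (he ▸ he2a)
      rw [ha', hb']
    · -- both ∉ SC
      have h : A1.rel a b := by
        rcases (hArel a b).mp hab with ⟨_, _, h⟩ | ⟨hn, _⟩ | ⟨_, hn, _⟩ | ⟨hn, _⟩
        · exact h
        · exact absurd hn hsa
        · exact absurd hn hsb
        · exact absurd hn hsa
      have h' : A1.rel b a := by
        rcases (hArel b a).mp hba with ⟨_, _, h⟩ | ⟨hn, _⟩ | ⟨_, hn, _⟩ | ⟨hn, _⟩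
        · exact h
        · exact absurd hn hsb
        · exact absurd hn hsa
        · exact absurd hn hsb
      exact h1a a b h h'
  · -- transitivity
    intro a b c hab hbc
    rcases (hArel a b).mp hab with ⟨hna, hnb, h⟩ | ⟨hsa, hsb, h⟩ |
      ⟨hna, hsb, e1, he1c, hae1, he1b⟩ | ⟨hsa, hnb, e1, he1c, hae1, he1b⟩ <;>
    rcases (hArel b c).mp hbc with ⟨hnb', hnc, h'⟩ | ⟨hsb', hsc, h'⟩ |
      ⟨hnb', hsc, e2, he2c, hbe2, he2c'⟩ | ⟨hsb', hnc, e2, he2c, hbe2, he2c'⟩ <;>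
    apply (hArel a c).mpr
    · exact Or.inl ⟨hna, hnc, h1t a b c h h'⟩
    · exact absurd hsb' hnb
    · exact Or.inr (Or.inr (Or.inl ⟨hna, hsc, e2, he2c, h1t a b e2 h hbe2, he2c'⟩))
    · exact absurd hsb' hnb
    · exact absurd hsb hnb'
    · exact Or.inr (Or.inl ⟨hsa, hsc, h2t a b c h h'⟩)
    · exact absurd hsb hnb'
    · exact Or.inr (Or.inr (Or.inr ⟨hsa, hnc, e2, he2c, h2t a b e2 h hbe2, he2c'⟩))
    · exact absurd hsb hnb'
    · exact Or.inr (Or.inr (Or.inl ⟨hna, hsc, e1, he1c, hae1, h2t e1 b c he1b h'⟩))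
    · exact absurd hsb hnb'
    · -- a ∉ SC, b ∈ SC, c ∉ SC
      refine Or.inl ⟨hna, hnc, ?_⟩
      have h12 : A1.rel e1 e2 :=
        (hccR e1 e2 he1c he2c).mpr (h2t e1 b e2 he1b hbe2)
      exact h1t a e1 c hae1 (h1t e1 e2 c h12 he2c')
    · exact Or.inr (Or.inr (Or.inr ⟨hsa, hnc, e1, he1c, hae1, h1t e1 b c he1b h'⟩))
    · exact absurd hsb' hnb
    · -- a ∈ SC, b ∉ SC, c ∈ SC
      refine Or.inr (Or.inl ⟨hsa, hsc, ?_⟩)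
      have h12 : A2.rel e1 e2 :=
        (hccR e1 e2 he1c he2c).mp (h1t e1 b e2 he1b hbe2)
      exact h2t a e1 c hae1 (h2t e1 e2 c h12 he2c')
    · exact absurd hsb' hnb
  · -- finitely many predecessors
    intro b hb
    rcases (hAcar b).mp hb with ⟨hb1, hnb⟩ | ⟨hb2, hsb⟩
    · have hfin1 := h1f b hb1
      have hsub : {x | A.rel x b} ⊆ {x | A1.rel x b} ∪
          ⋃ e ∈ {e | A1.rel e b ∧ chan e ∈ lcut}, {x | A2.rel x e} := by
        intro x hx
        rcases (hArel x b).mp hx with ⟨_, _, h⟩ | ⟨_, hn, _⟩ | ⟨_, hn, _⟩ |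
          ⟨_, _, e, hec, hxe, heb⟩
        · exact Or.inl h
        · exact absurd hn hnb
        · exact absurd hn hnb
        · exact Or.inr (Set.mem_biUnion (⟨heb, hec⟩ : A1.rel e b ∧ chan e ∈ lcut) hxe)
      refine Set.Finite.subset (Set.Finite.union hfin1 ?_) hsub
      refine Set.Finite.biUnion (hfin1.subset fun e he => he.1) ?_
      intro e he
      exact h2f e ((hccC e he.2).mp (h1c e b he.1).1)
    · have hfin2 := h2f b hb2
      have hsub : {x | A.rel x b} ⊆ {x | A2.rel x b} ∪
          ⋃ e ∈ {e | A2.rel e b ∧ chan e ∈ lcut}, {x | A1.rel x e} := by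
        intro x hx
        rcases (hArel x b).mp hx with ⟨_, hn, _⟩ | ⟨_, _, h⟩ |
          ⟨_, _, e, hec, hxe, heb⟩ | ⟨_, hn, _⟩
        · exact absurd hsb hn
        · exact Or.inl h
        · exact Or.inr (Set.mem_biUnion (⟨heb, hec⟩ : A2.rel e b ∧ chan e ∈ lcut) hxe)
        · exact absurd hsb hn
      refine Set.Finite.subset (Set.Finite.union hfin2 ?_) hsub
      refine Set.Finite.biUnion (hfin2.subset fun e he => he.1) ?_
      intro e he
      exact h1f e ((hccC e he.2).mpr (h2c e b he.1).1)
  · -- per-location conditions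
    intro ℓ
    by_cases hℓ : ℓ ∈ Src
    · constructor
      · intro a ha b hb
        rw [hproj2 ℓ hℓ] at ha hb
        rcases (hloc2 ℓ).1 a ha b hb with h | h
        · exact Or.inl ((hrel2 ℓ hℓ a b ha hb).mpr h)
        · exact Or.inr ((hrel2 ℓ hℓ b a hb ha).mpr h)
      · rw [projSeq_congr F chan msg A A2 ℓ (hproj2 ℓ hℓ)
          (fun a b ha hb => hrel2 ℓ hℓ a b ((hproj2 ℓ hℓ) ▸ ha) ((hproj2 ℓ hℓ) ▸ hb))]
        exact (hloc2 ℓ).2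
    · constructor
      · intro a ha b hb
        rw [hproj1 ℓ hℓ] at ha hb
        rcases (hloc1 ℓ).1 a ha b hb with h | h
        · exact Or.inl ((hrel1 ℓ hℓ a b ha hb).mpr h)
        · exact Or.inr ((hrel1 ℓ hℓ b a hb ha).mpr h)
      · rw [projSeq_congr F chan msg A A1 ℓ (hproj1 ℓ hℓ)
          (fun a b ha hb => hrel1 ℓ hℓ a b ((hproj1 ℓ hℓ) ▸ ha) ((hproj1 ℓ hℓ) ▸ hb))]
        exact (hloc1 ℓ).2
  · -- restriction to lobs
    refine EvStruct.ext' ?_ ?_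
    · ext e
      simp only [evRestrict, Set.mem_setOf_eq]
      constructor
      · rintro ⟨he, hc⟩
        rcases (hAcar e).mp he with ⟨he1, _⟩ | ⟨_, hsc⟩
        · exact ⟨he1, hc⟩
        · exact absurd hsc (hobsSC _ hc).1
      · rintro ⟨he1, hc⟩
        exact ⟨(hAcar e).mpr (Or.inl ⟨he1, (hobsSC _ hc).1⟩), hc⟩
    · funext a b
      apply propext
      simp only [evRestrict]
      constructor
      · rintro ⟨hr, hca, hcb⟩
        have hna := (hobsSC _ hca).1
        have hnb := (hobsSC _ hcb).1
        rcases (hArel a b).mp hr with ⟨_, _, h⟩ | ⟨hn, _⟩ | ⟨_, hn, _⟩ | ⟨hn, _⟩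
        · exact ⟨h, hca, hcb⟩
        · exact absurd hn hna
        · exact absurd hn hnb
        · exact absurd hn hna
      · rintro ⟨h, hca, hcb⟩
        exact ⟨(hArel a b).mpr (Or.inl ⟨(hobsSC _ hca).1, (hobsSC _ hcb).1, h⟩), hca, hcb⟩
  · -- restriction to lsrc
    refine EvStruct.ext' ?_ ?_
    · ext e
      simp only [evRestrict, Set.mem_setOf_eq]
      constructor
      · rintro ⟨he, hc⟩
        rcases (hAcar e).mp he with ⟨_, hn⟩ | ⟨he2, _⟩
        · exact absurd (hsrcSC _ hc) hn
        · exact ⟨he2, hc⟩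
      · rintro ⟨he2, hc⟩
        exact ⟨(hAcar e).mpr (Or.inr ⟨he2, hsrcSC _ hc⟩), hc⟩
    · funext a b
      apply propext
      simp only [evRestrict]
      constructor
      · rintro ⟨hr, hca, hcb⟩
        have hna := hsrcSC _ hca
        have hnb := hsrcSC _ hcb
        rcases (hArel a b).mp hr with ⟨hn, _⟩ | ⟨_, _, h⟩ | ⟨hn, _⟩ | ⟨_, hn, _⟩
        · exact absurd hna hn
        · exact ⟨h, hca, hcb⟩
        · exact absurd hna hn
        · exact absurd hnb hn
      · rintro ⟨h, hca, hcb⟩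
        exact ⟨(hArel a b).mpr (Or.inr (Or.inl ⟨hsrcSC _ hca, hsrcSC _ hcb, h⟩)), hca, hcb⟩
/-- Cut lemma: for an undirected cut `lcut` between `lsrc` and
`lobs` and an `lobs`-run `B_o`,
`J_{lobs→lsrc}(B_o) = ⋃_{B_c ∈ J_{lobs→lcut}(B_o)} J_{lcut→lsrc}(B_c)`. -/
theorem cut_lemma (F : Frame LO CH D) (chan : E → CH) (msg : E → D)
    (lsrc lcut lobs : Set CH) (Bo : EvStruct E)
    (hcut : IsCut F lsrc lcut lobs)
    (hBo : Bo ∈ lruns F chan msg lobs) :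
    cmpt F chan msg lobs lsrc Bo =
      ⋃ Bc ∈ cmpt F chan msg lobs lcut Bo, cmpt F chan msg lcut lsrc Bc := by
  ext B'
  simp only [Set.mem_iUnion, exists_prop]
  constructor
  · rintro ⟨A, hA, hAo, hAs⟩
    exact ⟨evRestrict chan A lcut, ⟨A, hA, hAo, rfl⟩, ⟨A, hA, rfl, hAs⟩⟩
  · rintro ⟨Bc, ⟨A1, hA1, hA1o, hA1c⟩, ⟨A2, hA2, hA2c, hA2s⟩⟩
    obtain ⟨A, hA, hAo, hAs⟩ := merge_exec F chan msg lsrc lcut lobs hcut A1 A2 hA1 hA2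
      (hA1c.trans hA2c.symm)
    exact ⟨A, hA, hAo.trans hA1o, hAs.trans hA2s⟩
end

section
/- Nondeducibility equals blur-limited flow: in a star-like state-machine frame F with domains d_1,…,d_k and machine location M, let p be a purge function for domain d_i and let f^p be the blur operator on sets of IN-runs that closes under the equivalence relation R defined by: R(B1,B2) iff there exist executions A1, A2 with B_j = A_j|IN (j=1,2) and p(A1)=p(A2). Then F ∈ ND^p if and only if F f^p-limits IN-to-C_i flow, i.e. for every C_i-run B_i the compatibility set J_{C_i→IN}(B_i) is f^p-blurred. -/
open scoped Classical

variable {LO CH D E : Type}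

/-- Locations of a star-like state-machine frame: domains `d_j` and machine `M`. -/
inductive SLoc (k : ℕ) : Type
  | dom (j : Fin k)
  | M

/-- Channels of a star-like state-machine frame: `c_j^in` from `d_j` to `M`,
and `c_j^out` from `M` to `d_j`. -/
inductive SChan (k : ℕ) : Type
  | cin (j : Fin k)
  | cout (j : Fin k)

/-- `F` is star-like: each `c_j^in` goes from `d_j` to `M` and each
`c_j^out` from `M` to `d_j`. -/
def IsStar {k : ℕ} {D : Type} (F : Frame (SLoc k) (SChan k) D) : Prop :=
  (∀ j, F.sender (SChan.cin j) = SLoc.dom j ∧ F.recipt (SChan.cin j) = SLoc.M) ∧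
  (∀ j, F.sender (SChan.cout j) = SLoc.M ∧ F.recipt (SChan.cout j) = SLoc.dom j)

/-- `IN`: the set of input channels. -/
def INset (k : ℕ) : Set (SChan k) := {c | ∃ j, c = SChan.cin j}

/-- `C_i = {c_i^in, c_i^out}`: domain `d_i`'s input and output channels. -/
def Cset {k : ℕ} (i : Fin k) : Set (SChan k) := {SChan.cin i, SChan.cout i}

/-- `vis(d_i)`: the input channels visible to `d_i` under `↪`. -/
def visSet {k : ℕ} (hook : Fin k → Fin k → Prop) (i : Fin k) : Set (SChan k) :=
  {c | ∃ j, hook j i ∧ c = SChan.cin j}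

/-- `p` is a `d_i`-purge function: it depends only on the input behavior, and
it determines the restriction of an execution to the channels visible to
`d_i`. -/
def IsPurge {k : ℕ} {D E A : Type} (F : Frame (SLoc k) (SChan k) D)
    (chan : E → SChan k) (msg : E → D)
    (hook : Fin k → Fin k → Prop) (i : Fin k) (p : EvStruct E → A) : Prop :=
  (∀ A1 A2 : EvStruct E, IsExec F chan msg A1 → IsExec F chan msg A2 →
    evRestrict chan A1 (INset k) = evRestrict chan A2 (INset k) → p A1 = p A2) ∧
  (∀ A1 A2 : EvStruct E, IsExec F chan msg A1 → IsExec F chan msg A2 →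
    p A1 = p A2 →
    evRestrict chan A1 (visSet hook i) = evRestrict chan A2 (visSet hook i))

/-- `F ∈ NI^p`: `p`-equivalent executions agree on `C_i`. -/
def NIp {k : ℕ} {D E A : Type} (F : Frame (SLoc k) (SChan k) D)
    (chan : E → SChan k) (msg : E → D) (i : Fin k) (p : EvStruct E → A) : Prop :=
  ∀ A1 A2 : EvStruct E, IsExec F chan msg A1 → IsExec F chan msg A2 →
    p A1 = p A2 → evRestrict chan A1 (Cset i) = evRestrict chan A2 (Cset i)

/-- `F ∈ ND^p`: if `p A1 = p A2` then the input behavior of `A2` is compatible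
with the `C_i`-behavior of `A1`. -/
def NDp {k : ℕ} {D E A : Type} (F : Frame (SLoc k) (SChan k) D)
    (chan : E → SChan k) (msg : E → D) (i : Fin k) (p : EvStruct E → A) : Prop :=
  ∀ A1 A2 : EvStruct E, IsExec F chan msg A1 → IsExec F chan msg A2 →
    p A1 = p A2 →
    evRestrict chan A2 (INset k) ∈
      cmpt F chan msg (Cset i) (INset k) (evRestrict chan A1 (Cset i))

/-- The relation `R` on `IN`-runs: `R B1 B2` iff there are executions
`A1, A2` with `B_j = A_j|IN` and `p A1 = p A2`. -/
def purgeRel {k : ℕ} {D E A : Type} (F : Frame (SLoc k) (SChan k) D)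
    (chan : E → SChan k) (msg : E → D) (p : EvStruct E → A)
    (B1 B2 : EvStruct E) : Prop :=
  ∃ A1 A2 : EvStruct E, IsExec F chan msg A1 ∧ IsExec F chan msg A2 ∧
    evRestrict chan A1 (INset k) = B1 ∧ evRestrict chan A2 (INset k) = B2 ∧
    p A1 = p A2

/-- The blur operator `f^p` on sets of `IN`-runs closing under `R`. -/
def fp {k : ℕ} {D E A : Type} (F : Frame (SLoc k) (SChan k) D)
    (chan : E → SChan k) (msg : E → D) (p : EvStruct E → A) :
    Set (EvStruct E) → Set (EvStruct E) :=
  fun S => {B2 | ∃ B1 ∈ S, purgeRel F chan msg p B1 B2}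

/-- nondeducibility equals `f^p`-limited `IN`-to-`C_i` flow:
`F ∈ ND^p` iff every compatibility set `J_{C_i→IN}(B_i)` is `f^p`-blurred. -/
theorem ND_iff_blur_limited {k : ℕ} {D E A : Type}
    (F : Frame (SLoc k) (SChan k) D)
    (chan : E → SChan k) (msg : E → D)
    (hook : Fin k → Fin k → Prop) (hrefl : ∀ j, hook j j)
    (i : Fin k) (p : EvStruct E → A)
    (hstar : IsStar F) (hp : IsPurge F chan msg hook i p) :
    NDp F chan msg i p ↔
      ∀ Bi ∈ lruns F chan msg (Cset i),
        fp F chan msg p (cmpt F chan msg (Cset i) (INset k) Bi) =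
          cmpt F chan msg (Cset i) (INset k) Bi := by
  constructor
  · intro hnd Bi _hBi
    apply Set.Subset.antisymm
    · rintro B2 ⟨B1, ⟨A0, hA0, hA0Ci, hA0IN⟩, A1, A2, hA1, hA2, hA1IN, hA2IN, hpeq⟩
      have hp01 : p A0 = p A1 := hp.1 A0 A1 hA0 hA1 (by rw [hA0IN, hA1IN])
      have := hnd A0 A2 hA0 hA2 (hp01.trans hpeq)
      rw [hA0Ci] at this
      rw [← hA2IN]
      exact this
    · rintro B ⟨A0, hA0, hA0Ci, hA0IN⟩
      exact ⟨B, ⟨A0, hA0, hA0Ci, hA0IN⟩, A0, A0, hA0, hA0, hA0IN, hA0IN, rfl⟩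
  · intro hblur A1 A2 hA1 hA2 hpeq
    have hBi : evRestrict chan A1 (Cset i) ∈ lruns F chan msg (Cset i) :=
      ⟨A1, hA1, rfl⟩
    rw [← hblur _ hBi]
    exact ⟨evRestrict chan A1 (INset k), ⟨A1, hA1, rfl, rfl⟩,
      A1, A2, hA1, hA2, rfl, rfl, hpeq⟩
end
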